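/- For 0 < α ≤ 1 and any type γ₁ with 0 ≤ γ₁ ≤ 1 - α, the Hilfer fractional derivative D^{α,γ₁}_H g = I^{γ₁} (d/dx) I^{1-α-γ₁} g is a left inverse of the Riemann–Liouville fractional integral Iᵅ on the space X_FT = I^{1-α}(L¹(0,1)): for every f ∈ X_FT, (D^{α,γ₁}_H (Iᵅ f))(x) = f(x) a.e. on [0,1]. -/

import Mathlib

open MeasureTheory Set

/-- Riemann–Liouville fractional integral of order `α` with base point `0`
    (with the convention `I⁰ = Id`). -/
noncomputable def RL (α : ℝ) (f : ℝ → ℝ) (x : ℝ) : ℝ :=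
  if α = 0 then f x else (Real.Gamma α)⁻¹ * ∫ t in (0:ℝ)..x, (x - t) ^ (α - 1) * f t

/-!
Work with a measurable representative `ψ` of `φ`. Fubini on the triangle `0 < s < t < x` together
with the Beta integral gives the semigroup law `I^a I^b ψ = I^(a+b) ψ`, for every `x ∈ [0,1]` when
`a + b ≥ 1` and for almost every `x` in general. Hence `I^(1-α-γ₁) I^α f = I^1 I^(1-α-γ₁) ψ` on
`[0,1]`, whose derivative is `I^(1-α-γ₁) ψ` almost everywhere by the Lebesgue differentiation
theorem, and applying `I^γ₁` to it gives back `I^(1-α) ψ = f`.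
-/

open Filter ProbabilityTheory Topology

section RL

variable {c x : ℝ} {u v : ℝ → ℝ}

@[simp]
theorem RL_zero (u : ℝ → ℝ) : RL 0 u = u := by
  funext x; simp [RL]

theorem RL_of_ne_zero (hc : c ≠ 0) (u : ℝ → ℝ) (x : ℝ) :
    RL c u x = (Real.Gamma c)⁻¹ * ∫ t in (0:ℝ)..x, (x - t) ^ (c - 1) * u t := if_neg hc

theorem RL_one (u : ℝ → ℝ) (x : ℝ) : RL 1 u x = ∫ t in (0:ℝ)..x, u t := by
  simp [RL_of_ne_zero one_ne_zero]

theorem RL_eq_setIntegral (hc : c ≠ 0) (hx : 0 ≤ x) (u : ℝ → ℝ) :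
    RL c u x = (Real.Gamma c)⁻¹ * ∫ t in Ioo 0 x, (x - t) ^ (c - 1) * u t := by
  rw [RL_of_ne_zero hc, intervalIntegral.integral_of_le hx, integral_Ioc_eq_integral_Ioo]

theorem RL_congr (c : ℝ) (hx : 0 ≤ x) (h : EqOn u v (Icc 0 x)) : RL c u x = RL c v x := by
  unfold RL
  split_ifs
  · exact h ⟨hx, le_rfl⟩
  · congr 1
    refine intervalIntegral.integral_congr fun t ht => ?_
    rw [uIcc_of_le hx] at ht
    simp only [h ht]

theorem RL_congr_ae (hc : c ≠ 0) (hx : x ∈ Icc 0 1)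
    (h : u =ᵐ[volume.restrict (Ioo 0 1)] v) : RL c u x = RL c v x := by
  rw [RL_of_ne_zero hc, RL_of_ne_zero hc]
  congr 1
  refine intervalIntegral.integral_congr_ae_restrict ?_
  rw [Measure.restrict_congr_set Ioo_ae_eq_Ioc] at h
  rw [uIoc_of_le hx.1]
  filter_upwards [ae_restrict_of_ae_restrict_of_subset (Ioc_subset_Ioc_right hx.2) h] with t ht
  rw [ht]

theorem RL_ae_congr (c : ℝ) (h : u =ᵐ[volume.restrict (Ioo 0 1)] v) :
    RL c u =ᵐ[volume.restrict (Ioo 0 1)] RL c v := by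
  by_cases hc : c = 0
  · simpa [hc] using h
  · exact ae_restrict_of_forall_mem measurableSet_Ioo fun x hx =>
      RL_congr_ae hc (Ioo_subset_Icc_self hx) h

end RL

theorem integral_rpow_mul_one_sub_rpow {a b : ℝ} (ha : 0 < a) (hb : 0 < b) :
    ∫ u in (0:ℝ)..1, u ^ (a - 1) * (1 - u) ^ (b - 1) = beta a b := by
  rw [beta_eq_betaIntegralReal a b ha hb, Complex.betaIntegral,
    intervalIntegral.integral_congr (g := fun u : ℝ => ((u ^ (a - 1) * (1 - u) ^ (b - 1) : ℝ) : ℂ)),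
    intervalIntegral.integral_ofReal, Complex.ofReal_re]
  intro u hu
  rw [uIcc_of_le zero_le_one] at hu
  simp only [Complex.ofReal_mul, Complex.ofReal_cpow hu.1, Complex.ofReal_cpow (sub_nonneg.2 hu.2)]
  push_cast; rfl

theorem integral_sub_rpow_mul_rpow_sub {a b s x : ℝ} (ha : 0 < a) (hb : 0 < b) (hsx : s < x) :
    ∫ t in s..x, (x - t) ^ (a - 1) * (t - s) ^ (b - 1) = beta a b * (x - s) ^ (a + b - 1) := by
  have hc : 0 < x - s := sub_pos.2 hsx
  have hsub := intervalIntegral.integral_comp_mul_add (a := 0) (b := 1)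
    (fun t => (x - t) ^ (a - 1) * (t - s) ^ (b - 1)) hc.ne' s
  simp only [mul_zero, zero_add, mul_one, sub_add_cancel, smul_eq_mul] at hsub
  rw [eq_inv_mul_iff_mul_eq₀ hc.ne'] at hsub
  rw [← hsub, intervalIntegral.integral_congr (g := fun u => (x - s) ^ (a - 1) * (x - s) ^ (b - 1) *
      (u ^ (b - 1) * (1 - u) ^ (a - 1))),
    intervalIntegral.integral_const_mul, integral_rpow_mul_one_sub_rpow hb ha]
  · have hab : beta b a = beta a b := by rw [beta, beta, mul_comm, add_comm]
    rw [hab, Real.rpow_sub hc, Real.rpow_sub hc, Real.rpow_sub hc, Real.rpow_add hc,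
      Real.rpow_one]
    field_simp
  · intro u hu
    rw [uIcc_of_le zero_le_one] at hu
    simp only
    rw [show x - ((x - s) * u + s) = (x - s) * (1 - u) by ring,
      show (x - s) * u + s - s = (x - s) * u by ring,
      Real.mul_rpow hc.le (sub_nonneg.2 hu.2), Real.mul_rpow hc.le hu.1]
    ring

theorem integrableOn_sub_rpow_mul_rpow_sub {a b s x : ℝ} (ha : 0 < a) (hb : 0 < b)
    (hsx : s < x) : IntegrableOn (fun t => (x - t) ^ (a - 1) * (t - s) ^ (b - 1)) (Ioo s x) := by
  -- the integral is positive, whereas a non-integrable function has Bochner integral `0`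
  rw [← integrableOn_Ioc_iff_integrableOn_Ioo]
  refine Integrable.of_integral_ne_zero ?_
  rw [← intervalIntegral.integral_of_le hsx.le, integral_sub_rpow_mul_rpow_sub ha hb hsx]
  exact (mul_pos (beta_pos ha hb) (Real.rpow_pos_of_pos (sub_pos.2 hsx) _)).ne'

/-- `Γ(a) Γ(b)` times the integrand of the double integral `I^a (I^b ψ) x`, in the variables
`(t, s)`. -/
noncomputable def rlKernel (a b x : ℝ) (ψ : ℝ → ℝ) : ℝ × ℝ → ℝ :=
  {p | 0 < p.2 ∧ p.2 < p.1 ∧ p.1 < x}.indicator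
    fun p => (x - p.1) ^ (a - 1) * (p.1 - p.2) ^ (b - 1) * ψ p.2

section rlKernel

variable {a b x : ℝ} {ψ : ℝ → ℝ}

theorem rlKernel_eq_indicator_fst (t s : ℝ) :
    rlKernel a b x ψ (t, s) = (Ioo 0 x).indicator
      (fun s => (Ioo s x).indicator (fun t => (x - t) ^ (a - 1) * (t - s) ^ (b - 1) * ψ s) t)
      s := by
  simp only [rlKernel, indicator, mem_Ioo]
  split_ifs <;> first | rfl | (exfalso; grind)

theorem rlKernel_eq_indicator_snd (t s : ℝ) :
    rlKernel a b x ψ (t, s) = (Ioo 0 x).indicator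
      (fun t => (Ioo 0 t).indicator (fun s => (x - t) ^ (a - 1) * ((t - s) ^ (b - 1) * ψ s)) s)
      t := by
  simp only [rlKernel, indicator, mem_Ioo, mul_assoc]
  split_ifs <;> first | rfl | (exfalso; grind)

theorem measurable_rlKernel (hψ : Measurable ψ) : Measurable (rlKernel a b x ψ) := by
  refine Measurable.indicator (by fun_prop) ?_
  exact (measurableSet_lt measurable_const measurable_snd).inter
    ((measurableSet_lt measurable_snd measurable_fst).inter
      (measurableSet_lt measurable_fst measurable_const))

theorem norm_rlKernel (p : ℝ × ℝ) : ‖rlKernel a b x ψ p‖ = rlKernel a b x (fun s => ‖ψ s‖) p := by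
  rw [rlKernel, rlKernel, norm_indicator_eq_indicator_norm]
  refine congrFun (indicator_congr ?_) p
  rintro q ⟨-, hq, hqx⟩
  dsimp only
  rw [norm_mul, norm_mul, Real.norm_of_nonneg (Real.rpow_nonneg (by linarith) _),
    Real.norm_of_nonneg (Real.rpow_nonneg (by linarith) _)]

theorem integral_rlKernel_fst (ha : 0 < a) (hb : 0 < b) (s : ℝ) :
    ∫ t, rlKernel a b x ψ (t, s) =
      (Ioo 0 x).indicator (fun s => beta a b * (x - s) ^ (a + b - 1) * ψ s) s := by
  simp_rw [rlKernel_eq_indicator_fst]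
  by_cases hs : s ∈ Ioo 0 x
  · simp only [indicator_of_mem hs]
    rw [integral_indicator measurableSet_Ioo, integral_mul_const,
      ← integral_Ioc_eq_integral_Ioo, ← intervalIntegral.integral_of_le hs.2.le,
      integral_sub_rpow_mul_rpow_sub ha hb hs.2]
  · simp [indicator_of_notMem hs]

theorem integral_rlKernel_snd (t : ℝ) :
    ∫ s, rlKernel a b x ψ (t, s) =
      (Ioo 0 x).indicator
        (fun t => (x - t) ^ (a - 1) * ∫ s in Ioo 0 t, (t - s) ^ (b - 1) * ψ s) t := by
  simp_rw [rlKernel_eq_indicator_snd]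
  by_cases ht : t ∈ Ioo 0 x
  · simp only [indicator_of_mem ht]
    rw [integral_indicator measurableSet_Ioo, integral_const_mul]
  · simp [indicator_of_notMem ht]

theorem integrable_rlKernel (ha : 0 < a) (hb : 0 < b) (hψ : Measurable ψ)
    (hw : IntegrableOn (fun s => (x - s) ^ (a + b - 1) * ψ s) (Ioo 0 x)) :
    Integrable (rlKernel a b x ψ) (volume.prod volume) := by
  refine (integrable_prod_iff' (measurable_rlKernel hψ).aestronglyMeasurable).2 ⟨?_, ?_⟩
  · refine Eventually.of_forall fun s => ?_
    simp_rw [rlKernel_eq_indicator_fst]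
    by_cases hs : s ∈ Ioo 0 x
    · simp only [indicator_of_mem hs]
      exact IntegrableOn.integrable_indicator
        ((integrableOn_sub_rpow_mul_rpow_sub ha hb hs.2).mul_const _) measurableSet_Ioo
    · simp [indicator_of_notMem hs]
  · simp_rw [norm_rlKernel, integral_rlKernel_fst ha hb]
    refine (integrable_indicator_iff measurableSet_Ioo).2 ?_
    refine IntegrableOn.congr_fun (hw.norm.const_mul (beta a b)) (fun s hs => ?_) measurableSet_Ioo
    rw [norm_mul, Real.norm_of_nonneg (Real.rpow_nonneg (by linarith [hs.2]) _), mul_assoc]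

end rlKernel

section Semigroup

variable {a b x : ℝ} {ψ : ℝ → ℝ}

theorem RL_RL (ha : 0 ≤ a) (hb : 0 ≤ b) (hψ : Measurable ψ) (hx : 0 ≤ x)
    (hw : IntegrableOn (fun s => (x - s) ^ (a + b - 1) * ψ s) (Ioo 0 x)) :
    RL a (RL b ψ) x = RL (a + b) ψ x := by
  rcases ha.eq_or_lt with rfl | ha
  · simp
  rcases hb.eq_or_lt with rfl | hb
  · simp
  have hGa := (Real.Gamma_pos_of_pos ha).ne'
  have hGb := (Real.Gamma_pos_of_pos hb).ne'
  have hGab := (Real.Gamma_pos_of_pos (add_pos ha hb)).ne'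
  calc RL a (RL b ψ) x
      = (Real.Gamma a)⁻¹ * ((Real.Gamma b)⁻¹ *
          ∫ t in Ioo 0 x, (x - t) ^ (a - 1) * ∫ s in Ioo 0 t, (t - s) ^ (b - 1) * ψ s) := by
        rw [RL_eq_setIntegral ha.ne' hx, ← integral_const_mul (Real.Gamma b)⁻¹]
        congr 1
        refine setIntegral_congr_fun measurableSet_Ioo fun t ht => ?_
        rw [RL_eq_setIntegral hb.ne' ht.1.le]
        ring
    _ = (Real.Gamma a)⁻¹ * ((Real.Gamma b)⁻¹ * ∫ t, ∫ s, rlKernel a b x ψ (t, s)) := by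
        simp_rw [integral_rlKernel_snd, integral_indicator measurableSet_Ioo]
    _ = (Real.Gamma a)⁻¹ * ((Real.Gamma b)⁻¹ * ∫ s, ∫ t, rlKernel a b x ψ (t, s)) := by
        rw [integral_integral_swap (f := fun t s => rlKernel a b x ψ (t, s))
          (integrable_rlKernel ha hb hψ hw)]
    _ = RL (a + b) ψ x := by
        simp_rw [integral_rlKernel_fst ha hb, integral_indicator measurableSet_Ioo,
          RL_eq_setIntegral (add_pos ha hb).ne' hx, mul_assoc, integral_const_mul, beta]
        field_simp

theorem integrableOn_rpow_mul_of_nonneg {r : ℝ} (hr : 0 ≤ r) (hx : x ∈ Icc 0 1)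
    (hi : IntegrableOn ψ (Ioo 0 1)) :
    IntegrableOn (fun s => (x - s) ^ r * ψ s) (Ioo 0 x) := by
  refine Integrable.bdd_mul (c := 1) (hi.mono_set (Ioo_subset_Ioo_right hx.2))
    (by fun_prop : Measurable fun s => (x - s) ^ r).aestronglyMeasurable ?_
  refine ae_restrict_of_forall_mem measurableSet_Ioo fun s hs => ?_
  rw [Real.norm_of_nonneg (Real.rpow_nonneg (by linarith [hs.2]) _)]
  exact Real.rpow_le_one (by linarith [hs.2]) (by linarith [hs.1, hx.1, hx.2]) hr

theorem RL_RL_of_one_le (ha : 0 ≤ a) (hb : 0 ≤ b) (hab : 1 ≤ a + b) (hψ : Measurable ψ)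
    (hi : IntegrableOn ψ (Ioo 0 1)) (hx : x ∈ Icc 0 1) :
    RL a (RL b ψ) x = RL (a + b) ψ x :=
  RL_RL ha hb hψ hx.1 (integrableOn_rpow_mul_of_nonneg (by linarith) hx hi)

theorem integrable_rlKernel_one (hb : 0 < b) (hψ : Measurable ψ)
    (hi : IntegrableOn ψ (Ioo 0 1)) : Integrable (rlKernel 1 b 1 ψ) (volume.prod volume) :=
  integrable_rlKernel one_pos hb hψ
    (integrableOn_rpow_mul_of_nonneg (by linarith) (right_mem_Icc.2 zero_le_one) hi)

theorem integrableOn_RL (hb : 0 ≤ b) (hψ : Measurable ψ) (hi : IntegrableOn ψ (Ioo 0 1)) :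
    IntegrableOn (RL b ψ) (Ioo 0 1) := by
  rcases hb.eq_or_lt with rfl | hb
  · simpa using hi
  refine IntegrableOn.congr_fun
    ((integrable_rlKernel_one hb hψ hi).integral_prod_left.const_mul (Real.Gamma b)⁻¹).integrableOn
    (fun t ht => ?_) measurableSet_Ioo
  simp [integral_rlKernel_snd, indicator_of_mem ht, RL_eq_setIntegral hb.ne' ht.1.le]

theorem ae_integrableOn_rpow_mul {c : ℝ} (hc : 0 < c) (hψ : Measurable ψ)
    (hi : IntegrableOn ψ (Ioo 0 1)) :
    ∀ᵐ x ∂volume.restrict (Ioo 0 1), IntegrableOn (fun s => (x - s) ^ (c - 1) * ψ s) (Ioo 0 x) := by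
  filter_upwards [ae_restrict_of_ae (integrable_rlKernel_one hc hψ hi).prod_right_ae,
    ae_restrict_mem measurableSet_Ioo] with x hx hmem
  simp_rw [rlKernel_eq_indicator_snd, indicator_of_mem hmem, sub_self, Real.rpow_zero, one_mul,
    integrable_indicator_iff measurableSet_Ioo] at hx
  exact hx

theorem RL_RL_ae (ha : 0 ≤ a) (hb : 0 ≤ b) (hψ : Measurable ψ) (hi : IntegrableOn ψ (Ioo 0 1)) :
    RL a (RL b ψ) =ᵐ[volume.restrict (Ioo 0 1)] RL (a + b) ψ := by
  rcases (add_nonneg ha hb).eq_or_lt with hab | hab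
  · obtain ⟨rfl, rfl⟩ : a = 0 ∧ b = 0 := ⟨by linarith, by linarith⟩
    simp
  · filter_upwards [ae_integrableOn_rpow_mul hab hψ hi, ae_restrict_mem measurableSet_Ioo]
      with x hw hx
    exact RL_RL ha hb hψ hx.1.le hw

end Semigroup

theorem ae_deriv_eq_of_eqOn_RL_one {G h : ℝ → ℝ} (hh : IntegrableOn h (Ioo 0 1))
    (hG : EqOn G (RL 1 h) (Ioo 0 1)) : deriv G =ᵐ[volume.restrict (Ioo 0 1)] h := by
  have hI : IntervalIntegrable h volume 0 1 :=
    (intervalIntegrable_iff_integrableOn_Ioo_of_le zero_le_one).2 hh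
  filter_upwards [ae_restrict_of_ae hI.ae_hasDerivAt_integral, ae_restrict_mem measurableSet_Ioo]
    with x hx hmem
  have hGx : G =ᶠ[𝓝 x] fun z => ∫ t in (0:ℝ)..z, h t :=
    eventually_of_mem (isOpen_Ioo.mem_nhds hmem) fun z hz => (hG hz).trans (RL_one h z)
  rw [hGx.deriv_eq]
  exact (hx (Ioo_subset_Icc_self.trans Icc_subset_uIcc hmem) 0 left_mem_uIcc).deriv

/-- The Hilfer fractional derivative `D^{α,γ₁}_H g = I^{γ₁} (d/dx) I^{1-α-γ₁} g`
    of order `0 < α ≤ 1` and type `0 ≤ γ₁ ≤ 1-α` is a left inverse of the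
    Riemann–Liouville fractional integral `Iᵅ` on `X_FT = I^{1-α}(L¹(0,1))`. -/
theorem hilfer_left_inverse (α γ₁ : ℝ) (hα : 0 < α) (hα1 : α ≤ 1)
    (hγ : 0 ≤ γ₁) (hγ1 : γ₁ ≤ 1 - α) (f φ : ℝ → ℝ)
    (hφ : IntegrableOn φ (Ioo (0:ℝ) 1))
    (hf : ∀ x ∈ Icc (0:ℝ) 1, f x = RL (1 - α) φ x) :
    ∀ᵐ x ∂(volume.restrict (Icc (0:ℝ) 1)),
      RL γ₁ (fun y => deriv (fun z => RL (1 - α - γ₁) (RL α f) z) y) x = f x := by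
  have hβ : 0 ≤ 1 - α - γ₁ := by linarith
  obtain ⟨ψ, hψ, hφψ⟩ : ∃ ψ, Measurable ψ ∧ φ =ᵐ[volume.restrict (Ioo 0 1)] ψ :=
    ⟨hφ.1.mk φ, hφ.1.stronglyMeasurable_mk.measurable, hφ.1.ae_eq_mk⟩
  have hψi : IntegrableOn ψ (Ioo 0 1) := hφ.congr hφψ
  have hfψ : f =ᵐ[volume.restrict (Ioo 0 1)] RL (1 - α) ψ :=
    EventuallyEq.trans
      (ae_restrict_of_forall_mem measurableSet_Ioo fun x hx => hf x (Ioo_subset_Icc_self hx))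
      (RL_ae_congr _ hφψ)
  have hIf : ∀ z ∈ Icc (0:ℝ) 1, RL α f z = RL 1 ψ z := fun z hz => by
    rw [RL_congr_ae hα.ne' hz hfψ, RL_RL_of_one_le hα.le (by linarith) (by linarith) hψ hψi hz,
      add_sub_cancel]
  have hG : EqOn (RL (1 - α - γ₁) (RL α f)) (RL 1 (RL (1 - α - γ₁) ψ)) (Icc 0 1) := fun z hz => by
    rw [RL_congr _ hz.1 fun y hy => hIf y ⟨hy.1, hy.2.trans hz.2⟩,
      RL_RL_of_one_le hβ zero_le_one (by linarith) hψ hψi hz,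
      RL_RL_of_one_le zero_le_one hβ (by linarith) hψ hψi hz, add_comm]
  have hD := ae_deriv_eq_of_eqOn_RL_one (integrableOn_RL hβ hψ hψi)
    (hG.mono Ioo_subset_Icc_self)
  rw [← Measure.restrict_congr_set Ioo_ae_eq_Icc]
  calc RL γ₁ (deriv (RL (1 - α - γ₁) (RL α f)))
      =ᵐ[volume.restrict (Ioo 0 1)] RL γ₁ (RL (1 - α - γ₁) ψ) := RL_ae_congr γ₁ hD
    _ =ᵐ[volume.restrict (Ioo 0 1)] RL (1 - α) ψ := by
      simpa only [add_sub_cancel] using RL_RL_ae hγ hβ hψ hψi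
    _ =ᵐ[volume.restrict (Ioo 0 1)] f := hfψ.symm
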